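/- For any r ≥ 2, the word w = x_1 x_2 ... x_{r-1} x_r^2 x_{r-1} ... x_2 x_1 (ending with x_1 rather than x_1^{-1}) is not primitivity-blocking in F_r. -/

import Mathlib

open FreeGroup

/-- The free group of rank `r` on the basis `Fin r`. -/
abbrev F (r : ℕ) := FreeGroup (Fin r)

/-- `v` is a subword of `u`: the reduced word of `v` occurs as a contiguous
block of the reduced word of `u`. -/
def Subword {α : Type*} [DecidableEq α] (v u : FreeGroup α) : Prop :=
  v.toWord <:+: u.toWord

/-- `u` is cyclically reduced: the first letter of its reduced word is not the
inverse of its last letter. -/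
def CyclRed {α : Type*} [DecidableEq α] (u : FreeGroup α) : Prop :=
  ∀ a ∈ u.toWord.head?, ∀ b ∈ u.toWord.getLast?, a ≠ (b.1, !b.2)

/-- `u` is primitive: some automorphism sends a generator to `u`
(equivalently, `u` belongs to a basis). -/
def IsPrimitive {α : Type*} [DecidableEq α] (u : FreeGroup α) : Prop :=
  ∃ (φ : FreeGroup α ≃* FreeGroup α) (i : α), φ (FreeGroup.of i) = u

/-- `v` is primitivity-blocking: it is not a subword of any cyclically reduced
primitive element. -/
def PrimitivityBlocking {α : Type*} [DecidableEq α] (v : FreeGroup α) : Prop :=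
  ∀ u : FreeGroup α, IsPrimitive u → CyclRed u → ¬ Subword v u

/-- Reduced word length. -/
def len {α : Type*} [DecidableEq α] (u : FreeGroup α) : ℕ := u.toWord.length

/-- `v` is `w`-orbit-blocking: for every automorphism `φ`, `v` is not a subword
of the cyclic reduction of `φ w` (i.e. of any cyclically reduced element
conjugate to `φ w`). -/
def OrbitBlocking {α : Type*} [DecidableEq α] (w v : FreeGroup α) : Prop :=
  ∀ (φ : FreeGroup α ≃* FreeGroup α) (c : FreeGroup α),
    CyclRed c → IsConj c (φ w) → ¬ Subword v c

/-- A word is slender if some generator occurs (with exponent `±1`) at most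
once in its reduced word. -/
def Slender {α : Type*} [DecidableEq α] (w : FreeGroup α) : Prop :=
  ∃ x : α, (w.toWord.countP fun p => decide (p.1 = x)) ≤ 1


/-!
Put `U = x₂ ⋯ x_{r-1} x_r² x_{r-1} ⋯ x₂`, so that `w = x₁ U x₁`. The positive, hence cyclically
reduced, word `v = U w x₂ = U x₁ U x₁ x₂` contains `w`, and it is primitive: it is the image of
`x₂` under the transvection `x₂ ↦ x₁² x₂` followed by the transvection `x₁ ↦ U x₁`, which is an
automorphism because `U` does not involve `x₁`.
-/

namespace FreeGroup

variable {α : Type*}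

theorem isReduced_of_forall_snd {L : List (α × Bool)} (h : ∀ p ∈ L, p.2 = true) :
    IsReduced L :=
  (List.pairwise_of_forall_mem_list (r := fun a b : α × Bool => a.1 = b.1 → a.2 = b.2)
    fun a ha b hb _ => (h a ha).trans (h b hb).symm).isChain

theorem toWord_mk_of_forall_snd [DecidableEq α] {L : List (α × Bool)}
    (h : ∀ p ∈ L, p.2 = true) : (mk L).toWord = L := by
  rw [toWord_mk, (isReduced_of_forall_snd h).reduce_eq]

theorem mk_mem_closure_of_forall_fst {s : Set α} {L : List (α × Bool)}
    (h : ∀ p ∈ L, p.1 ∈ s) : mk L ∈ Subgroup.closure (of '' s) := by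
  induction L with
  | nil => exact one_mem _
  | cons p L ih =>
    obtain ⟨x, b⟩ := p
    have hx : of x ∈ Subgroup.closure (of '' s) :=
      Subgroup.subset_closure ⟨x, h _ List.mem_cons_self, rfl⟩
    have hL := ih fun q hq => h q (List.mem_cons_of_mem _ hq)
    rw [← List.singleton_append, ← mul_mk]
    cases b
    · exact mul_mem (inv_mem hx) hL
    · exact mul_mem hx hL

theorem lift_eq_self_of_mem_closure {f : α → FreeGroup α} {s : Set α}
    (hf : ∀ a ∈ s, f a = of a) {x : FreeGroup α} (hx : x ∈ Subgroup.closure (of '' s)) :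
    lift f x = x := by
  refine MonoidHom.eqOn_closure (g := MonoidHom.id _) ?_ hx
  rintro _ ⟨a, ha, rfl⟩
  simp [hf a ha]

section Transvection

variable [DecidableEq α]

def transvection (i : α) (u : FreeGroup α) : FreeGroup α →* FreeGroup α :=
  lift (Function.update of i (u * of i))

theorem transvection_of_self (i : α) (u : FreeGroup α) : transvection i u (of i) = u * of i := by
  simp [transvection]

theorem transvection_of_of_ne {i j : α} (h : j ≠ i) (u : FreeGroup α) :
    transvection i u (of j) = of j := by
  simp [transvection, h]

theorem transvection_apply_of_mem_closure (i : α) (u : FreeGroup α) {x : FreeGroup α}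
    (hx : x ∈ Subgroup.closure (of '' {i}ᶜ)) : transvection i u x = x :=
  lift_eq_self_of_mem_closure (fun _ ha => Function.update_of_ne ha _ _) hx

theorem transvection_comp_transvection_inv {i : α} {u : FreeGroup α}
    (hu : u ∈ Subgroup.closure (of '' {i}ᶜ)) :
    (transvection i u).comp (transvection i u⁻¹) = MonoidHom.id _ := by
  refine ext_hom _ _ fun j => ?_
  rcases eq_or_ne j i with rfl | hj
  · simp [transvection_of_self, transvection_apply_of_mem_closure j u (inv_mem hu)]
  · simp [transvection_of_of_ne hj]

def transvectionEquiv {i : α} {u : FreeGroup α} (hu : u ∈ Subgroup.closure (of '' {i}ᶜ)) :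
    FreeGroup α ≃* FreeGroup α :=
  MonoidHom.toMulEquiv (transvection i u) (transvection i u⁻¹)
    (by simpa using transvection_comp_transvection_inv (inv_mem hu))
    (transvection_comp_transvection_inv hu)

theorem transvectionEquiv_apply {i : α} {u : FreeGroup α}
    (hu : u ∈ Subgroup.closure (of '' {i}ᶜ)) (x : FreeGroup α) :
    transvectionEquiv hu x = transvection i u x :=
  rfl

end Transvection

end FreeGroup

open FreeGroup

theorem isPrimitive_mul_of_mul_of_mul_of {α : Type*} [DecidableEq α] {a b : α} (hab : a ≠ b)
    {u : FreeGroup α} (hu : u ∈ Subgroup.closure (of '' {a}ᶜ)) :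
    IsPrimitive (u * (of a * u * of a) * of b) := by
  have haa : of a * of a ∈ Subgroup.closure (of '' {b}ᶜ) :=
    mul_mem (Subgroup.subset_closure ⟨a, hab, rfl⟩) (Subgroup.subset_closure ⟨a, hab, rfl⟩)
  refine ⟨(transvectionEquiv haa).trans (transvectionEquiv hu), b, ?_⟩
  simp only [MulEquiv.trans_apply, transvectionEquiv_apply, transvection_of_self, _root_.map_mul,
    transvection_of_of_ne hab.symm]
  group

theorem cyclRed_mk_of_forall_snd {α : Type*} [DecidableEq α] {L : List (α × Bool)}
    (h : ∀ p ∈ L, p.2 = true) : CyclRed (mk L) := by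
  rw [CyclRed, toWord_mk_of_forall_snd h]
  intro x hx y hy hxy
  have hx' := h x (List.mem_of_mem_head? hx)
  have hy' := h y (List.mem_of_getLast? hy)
  simp [hxy, hy'] at hx'

/-- `x_a U x_a` is a subword of the cyclically reduced primitive word `U x_a U x_a x_b`. -/
theorem not_primitivityBlocking_mk_cons_append {α : Type*} [DecidableEq α] {a b : α}
    (hab : a ≠ b) {U : List (α × Bool)} (hpos : ∀ p ∈ U, p.2 = true)
    (hU : ∀ p ∈ U, p.1 ≠ a) :
    ¬ PrimitivityBlocking (mk ((a, true) :: U ++ [(a, true)])) := by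
  set W := (a, true) :: U ++ [(a, true)]
  have hWpos : ∀ p ∈ W, p.2 = true := by simp +contextual [W, or_imp, hpos]
  have hVpos : ∀ p ∈ U ++ W ++ [(b, true)], p.2 = true := by
    simp +contextual [or_imp, hpos, hWpos]
  have hprim : IsPrimitive (mk (U ++ W ++ [(b, true)])) := by
    convert isPrimitive_mul_of_mul_of_mul_of hab (mk_mem_closure_of_forall_fst hU) using 1
    simp only [W, ← mul_mk]
    rfl
  intro H
  refine H _ hprim (cyclRed_mk_of_forall_snd hVpos) ?_
  rw [Subword, toWord_mk_of_forall_snd hWpos, toWord_mk_of_forall_snd hVpos]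
  exact ⟨U, [(b, true)], rfl⟩

theorem List.ofFn_append_ofFn_rev {β : Type*} {n : ℕ} (f : Fin (n + 1) → β) :
    (List.ofFn f ++ List.ofFn fun i => f i.rev) =
      f 0 :: ((List.ofFn fun i => f i.succ) ++ List.ofFn fun i => f i.rev.succ) ++ [f 0] := by
  rw [List.ofFn_succ (f := f), List.ofFn_succ' (f := fun i => f i.rev)]
  simp [Fin.rev_castSucc, Fin.rev_last]

/-- `x1 x2 ⋯ x_{r-1} x_r^2 x_{r-1} ⋯ x2 x1` is not
primitivity-blocking in `F_r`, `r ≥ 2`. -/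
theorem stmt11 (r : ℕ) (hr : 2 ≤ r) :
    ¬ PrimitivityBlocking (FreeGroup.mk
      ((List.ofFn fun i : Fin r => ((i : Fin r), true)) ++
       (List.ofFn fun i : Fin r => ((i.rev : Fin r), true)))) := by
  obtain ⟨n, rfl⟩ : ∃ n, r = n + 2 := ⟨r - 2, by omega⟩
  rw [List.ofFn_append_ofFn_rev]
  refine not_primitivityBlocking_mk_cons_append (b := 1) zero_ne_one ?_ ?_ <;>
    simp only [List.mem_append, List.mem_ofFn] <;> rintro _ (⟨i, rfl⟩ | ⟨j, rfl⟩)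
  exacts [rfl, rfl, i.succ_ne_zero, j.rev.succ_ne_zero]
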